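/- The doubled clique DG_n on n vertices is a pure Nash equilibrium of the adversarial network creation game whenever the edge price α satisfies α ≤ 1/(n(n-1)-1). -/

import Mathlib

open scoped BigOperators ENNReal

/-- A walk of length `n` between two vertices under step relation `r`. -/
def walkLen {V : Type*} (r : V → V → Prop) : ℕ → V → V → Prop
  | 0, u, v => u = v
  | (n+1), u, v => ∃ w, r u w ∧ walkLen r n w v

/-- Adjacency in a multigraph given by a multiset of (undirected) edges. -/
def mAdj {V : Type*} (m : Multiset (Sym2 V)) (u v : V) : Prop := s(u, v) ∈ m

/-- Hop-count distance (possibly infinite) in a multigraph. -/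
noncomputable def medist {V : Type*} (m : Multiset (Sym2 V)) (u v : V) : ℕ∞ :=
  sInf ((fun n : ℕ => (n : ℕ∞)) '' {n | walkLen (mAdj m) n u v})

/-- Expected distance cost (in `ℝ≥0∞`) of vertex `u` in a multigraph under uniform random
deletion of one edge (if there are no edges, the plain distance cost). -/
noncomputable def evCost {V : Type*} [DecidableEq V] [Fintype V]
    (m : Multiset (Sym2 V)) (u : V) : ℝ≥0∞ :=
  if Multiset.card m = 0 then ∑ v : V, ((medist m u v : ℕ∞) : ℝ≥0∞)
  else (Multiset.card m : ℝ≥0∞)⁻¹ *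
    (m.map (fun e => ∑ v : V, ((medist (m.erase e) u v : ℕ∞) : ℝ≥0∞))).sum

/-- The multigraph built from a strategy profile of the network creation game. -/
def edgeMS {n : ℕ} (s : Fin n → Multiset (Fin n)) : Multiset (Sym2 (Fin n)) :=
  ∑ u : Fin n, (s u).map (fun v => s(u, v))

/-- Cost of agent `u`: `α` per owned edge plus expected distance cost. -/
noncomputable def agentCost {n : ℕ} (α : ℝ≥0∞) (s : Fin n → Multiset (Fin n)) (u : Fin n) :
    ℝ≥0∞ :=
  α * (Multiset.card (s u) : ℝ≥0∞) + evCost (edgeMS s) u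

/-- Pure Nash equilibrium: no agent can strictly decrease its cost by a unilateral change
of the multiset of edges it owns (an agent may not buy edges to itself). -/
def IsNE {n : ℕ} (α : ℝ≥0∞) (s : Fin n → Multiset (Fin n)) : Prop :=
  ∀ u : Fin n, ∀ t : Multiset (Fin n), u ∉ t →
    agentCost α s u ≤ agentCost α (Function.update s u t) u

/-!
After deleting any single edge of `DG_n`, every pair is still adjacent, so each agent already has
the least possible distance cost `n - 1` and buying edges cannot pay. Suppose agent `u` sells edges,
keeping `k' < k`; the new graph has `|E| ≤ n(n-1) - 1` edges. If the pair `{u, v}` is left with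
multiplicity `c_v < 2`, the expected distance from `u` to `v` grows by at least `(2 - c_v) / |E|`:
for `c_v = 1` the one deletion of that edge (out of `|E|`) makes it `≥ 2`, for `c_v = 0` every
deletion does (and `|E| ≥ 2`; with at most one edge the cost is infinite). Since
`k - k' ≤ ∑ (2 - c_v)` and `α ≤ 1 / |E|`, the saving `α (k - k')` is at most the increase in
distance cost.
-/

open Finset

lemma mem_erase_of_two_le_count {α : Type*} [DecidableEq α] {m : Multiset α} {a : α}
    (h : 2 ≤ m.count a) (b : α) : a ∈ m.erase b := by
  by_cases hab : a = b
  · subst hab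
    rw [← Multiset.count_pos, Multiset.count_erase_self]
    omega
  · exact (Multiset.mem_erase_of_ne hab).mpr (Multiset.count_pos.mp (by omega))

section Medist

variable {V : Type*} {m : Multiset (Sym2 V)} {u v : V}

lemma medist_self (m : Multiset (Sym2 V)) (u : V) : medist m u u = 0 :=
  nonpos_iff_eq_zero.mp (sInf_le ⟨0, rfl, rfl⟩)

lemma one_le_medist (h : u ≠ v) : 1 ≤ medist m u v := by
  refine le_sInf ?_
  rintro _ ⟨_ | k, hk, rfl⟩
  · exact absurd hk h
  · exact (Nat.one_le_cast (α := ℕ∞)).mpr k.succ_pos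

lemma medist_eq_one (h : u ≠ v) (huv : s(u, v) ∈ m) : medist m u v = 1 :=
  le_antisymm (sInf_le ⟨1, ⟨v, huv, rfl⟩, rfl⟩) (one_le_medist h)

lemma two_le_medist (h : u ≠ v) (huv : s(u, v) ∉ m) : 2 ≤ medist m u v := by
  refine le_sInf ?_
  rintro _ ⟨_ | _ | k, hk, rfl⟩
  · exact absurd hk h
  · obtain ⟨w, hw, rfl⟩ := hk
    exact absurd hw huv
  · exact (Nat.ofNat_le_cast (α := ℕ∞)).mpr (by omega)

lemma medist_zero (h : u ≠ v) : medist (0 : Multiset (Sym2 V)) u v = ⊤ := by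
  refine sInf_eq_top.mpr ?_
  rintro _ ⟨_ | k, hk, rfl⟩
  · exact absurd hk h
  · obtain ⟨w, hw, -⟩ := hk
    exact absurd hw (Multiset.notMem_zero _)

lemma card_add_two_sub_count_le_sum_medist_erase [DecidableEq V] (huv : u ≠ v)
    (hm : 2 ≤ Multiset.card m) :
    (Multiset.card m : ℝ≥0∞) + ((2 - m.count s(u, v) : ℕ) : ℝ≥0∞) ≤
      (m.map fun e => (medist (m.erase e) u v : ℝ≥0∞)).sum := by
  have hsum {m₀ : Multiset (Sym2 V)} {a : ℝ≥0∞}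
      (ha : ∀ e ∈ m₀, a ≤ (medist (m.erase e) u v : ℝ≥0∞)) :
      Multiset.card m₀ • a ≤ (m₀.map fun e => (medist (m.erase e) u v : ℝ≥0∞)).sum := by
    rw [← Multiset.card_map (fun e => (medist (m.erase e) u v : ℝ≥0∞)) m₀]
    exact Multiset.card_nsmul_le_sum (by simpa using ha)
  have hone : ∀ e ∈ m, 1 ≤ (medist (m.erase e) u v : ℝ≥0∞) := fun e _ => by
    exact_mod_cast one_le_medist huv
  match hc : m.count s(u, v) with
  | 0 =>
    have htwo : ∀ e ∈ m, 2 ≤ (medist (m.erase e) u v : ℝ≥0∞) := fun e _ => by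
      exact_mod_cast two_le_medist huv fun hmem =>
        Multiset.count_eq_zero.mp hc (Multiset.mem_of_mem_erase hmem)
    calc (Multiset.card m : ℝ≥0∞) + ((2 - 0 : ℕ) : ℝ≥0∞) ≤ Multiset.card m • 2 := by
          rw [nsmul_eq_mul, mul_two]; gcongr
      _ ≤ _ := hsum htwo
  | 1 =>
    have hmem : s(u, v) ∈ m := Multiset.count_pos.mp (by omega)
    have hlost : 2 ≤ (medist (m.erase s(u, v)) u v : ℝ≥0∞) := by
      refine mod_cast two_le_medist huv ?_
      rw [← Multiset.count_pos, Multiset.count_erase_self, hc]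
      simp
    rw [← Multiset.sum_map_erase hmem, ← Multiset.card_erase_add_one hmem]
    calc ((Multiset.card (m.erase s(u, v)) + 1 : ℕ) : ℝ≥0∞) + ((2 - 1 : ℕ) : ℝ≥0∞)
        = 2 + Multiset.card (m.erase s(u, v)) • 1 := by push_cast; ring
      _ ≤ _ := add_le_add hlost (hsum fun e he => hone e (Multiset.mem_of_mem_erase he))
  | k + 2 => simpa using hsum hone

end Medist

section EvCost

variable {V : Type*} [Fintype V] [DecidableEq V]

lemma sum_erase_one (u : V) : ∑ _v ∈ univ.erase u, (1 : ℝ≥0∞) = (Fintype.card V - 1 : ℕ) := by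
  simp [card_erase_of_mem]

lemma card_sub_one_le_sum_medist (m : Multiset (Sym2 V)) (u : V) :
    ((Fintype.card V - 1 : ℕ) : ℝ≥0∞) ≤ ∑ v, (medist m u v : ℝ≥0∞) :=
  calc ((Fintype.card V - 1 : ℕ) : ℝ≥0∞) = ∑ _v ∈ univ.erase u, 1 := (sum_erase_one u).symm
    _ ≤ ∑ v ∈ univ.erase u, (medist m u v : ℝ≥0∞) := sum_le_sum fun v hv => by
        exact_mod_cast one_le_medist (ne_of_mem_erase hv).symm
    _ ≤ _ := sum_le_sum_of_subset (erase_subset _ _)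

lemma sum_medist_eq_of_forall_mem {m : Multiset (Sym2 V)} {u : V}
    (h : ∀ v, v ≠ u → s(u, v) ∈ m) :
    ∑ v, (medist m u v : ℝ≥0∞) = (Fintype.card V - 1 : ℕ) :=
  calc ∑ v, (medist m u v : ℝ≥0∞) = ∑ v ∈ univ.erase u, (medist m u v : ℝ≥0∞) :=
        (sum_erase _ (by simp [medist_self])).symm
    _ = ∑ _v ∈ univ.erase u, 1 := sum_congr rfl fun v hv => by
        have hvu := ne_of_mem_erase hv
        simp [medist_eq_one hvu.symm (h v hvu)]
    _ = _ := sum_erase_one u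

lemma le_evCost {m : Multiset (Sym2 V)} {u : V} {c : ℝ≥0∞}
    (h₀ : m = 0 → c ≤ ∑ v, (medist m u v : ℝ≥0∞))
    (h : ∀ e ∈ m, c ≤ ∑ v, (medist (m.erase e) u v : ℝ≥0∞)) : c ≤ evCost m u := by
  unfold evCost
  split_ifs with hm
  · exact h₀ (Multiset.card_eq_zero.mp hm)
  · rw [← ENNReal.mul_le_iff_le_inv (by exact_mod_cast hm) (ENNReal.natCast_ne_top _),
      ← nsmul_eq_mul, ← Multiset.card_map (fun e => ∑ v, (medist (m.erase e) u v : ℝ≥0∞)) m]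
    exact Multiset.card_nsmul_le_sum (by simpa using h)

lemma evCost_le {m : Multiset (Sym2 V)} {u : V} {c : ℝ≥0∞}
    (h₀ : m = 0 → ∑ v, (medist m u v : ℝ≥0∞) ≤ c)
    (h : ∀ e ∈ m, ∑ v, (medist (m.erase e) u v : ℝ≥0∞) ≤ c) : evCost m u ≤ c := by
  unfold evCost
  split_ifs with hm
  · exact h₀ (Multiset.card_eq_zero.mp hm)
  · rw [← ENNReal.inv_mul_cancel_left (by exact_mod_cast hm) (ENNReal.natCast_ne_top _) (b := c),
      ← nsmul_eq_mul, ← Multiset.card_map (fun e => ∑ v, (medist (m.erase e) u v : ℝ≥0∞)) m]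
    gcongr
    exact Multiset.sum_le_card_nsmul _ _ (by simpa using h)

lemma card_sub_one_le_evCost (m : Multiset (Sym2 V)) (u : V) :
    ((Fintype.card V - 1 : ℕ) : ℝ≥0∞) ≤ evCost m u :=
  le_evCost (fun _ => card_sub_one_le_sum_medist m u)
    (fun e _ => card_sub_one_le_sum_medist (m.erase e) u)

lemma evCost_le_card_sub_one {m : Multiset (Sym2 V)} {u : V}
    (h : ∀ v, v ≠ u → 2 ≤ m.count s(u, v)) : evCost m u ≤ (Fintype.card V - 1 : ℕ) :=
  evCost_le
    (fun _ => (sum_medist_eq_of_forall_mem fun v hv =>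
      Multiset.count_pos.mp (two_pos.trans_le (h v hv))).le)
    (fun e _ => (sum_medist_eq_of_forall_mem fun v hv => mem_erase_of_two_le_count (h v hv) e).le)

lemma evCost_eq_top {m : Multiset (Sym2 V)} {u v : V} (hm : Multiset.card m ≤ 1) (hv : v ≠ u) :
    evCost m u = ⊤ := by
  have htop : ⊤ ≤ ∑ w, (medist (0 : Multiset (Sym2 V)) u w : ℝ≥0∞) :=
    calc ⊤ = (medist (0 : Multiset (Sym2 V)) u v : ℝ≥0∞) := by simp [medist_zero hv.symm]
      _ ≤ _ := single_le_sum (f := fun w => (medist (0 : Multiset (Sym2 V)) u w : ℝ≥0∞))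
          (fun _ _ => zero_le) (mem_univ v)
  refine top_le_iff.mp (le_evCost (fun h₀ => h₀ ▸ htop) fun e he => ?_)
  have hcard := Multiset.card_erase_add_one he
  rwa [(Multiset.card_eq_zero (s := m.erase e)).mp (by omega)]

lemma le_evCost_of_two_le_card {m : Multiset (Sym2 V)} (hm : 2 ≤ Multiset.card m) (u : V) :
    ((Fintype.card V - 1 : ℕ) : ℝ≥0∞) + (Multiset.card m : ℝ≥0∞)⁻¹ *
      ∑ v ∈ univ.erase u, ((2 - m.count s(u, v) : ℕ) : ℝ≥0∞) ≤ evCost m u := by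
  have hm₀ : Multiset.card m ≠ 0 := by omega
  rw [evCost, if_neg hm₀, ← ENNReal.inv_mul_cancel_left (a := (Multiset.card m : ℝ≥0∞))
    (by exact_mod_cast hm₀) (ENNReal.natCast_ne_top _) (b := ((Fintype.card V - 1 : ℕ) : ℝ≥0∞)),
    ← mul_add]
  gcongr
  calc (Multiset.card m : ℝ≥0∞) * ((Fintype.card V - 1 : ℕ) : ℝ≥0∞) +
        ∑ v ∈ univ.erase u, ((2 - m.count s(u, v) : ℕ) : ℝ≥0∞)
      = ∑ v ∈ univ.erase u, ((Multiset.card m : ℝ≥0∞) + ((2 - m.count s(u, v) : ℕ) : ℝ≥0∞)) := by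
        rw [sum_add_distrib, sum_const, card_erase_of_mem (mem_univ u), card_univ, nsmul_eq_mul,
          mul_comm]
    _ ≤ ∑ v ∈ univ.erase u, (m.map fun e => (medist (m.erase e) u v : ℝ≥0∞)).sum :=
        sum_le_sum fun v hv =>
          card_add_two_sub_count_le_sum_medist_erase (ne_of_mem_erase hv).symm hm
    _ = (m.map fun e => ∑ v ∈ univ.erase u, (medist (m.erase e) u v : ℝ≥0∞)).sum :=
        Multiset.sum_map_sum.symm
    _ ≤ _ := Multiset.sum_map_le_sum_map _ _ fun e _ => sum_le_sum_of_subset (erase_subset _ _)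

end EvCost

section EdgeMultiset

variable {n : ℕ} (s : Fin n → Multiset (Fin n))

lemma card_edgeMS : Multiset.card (edgeMS s) = ∑ w, Multiset.card (s w) := by
  simp [edgeMS, Multiset.card_sum]

lemma count_edgeMS {u v : Fin n} (h : u ≠ v) :
    (edgeMS s).count s(u, v) = (s u).count v + (s v).count u := by
  have hinj (w : Fin n) : Function.Injective fun y => s(w, y) := fun _ _ => Sym2.congr_right.mp
  rw [edgeMS, Multiset.count_sum', Fintype.sum_eq_add u v h, Multiset.count_map_eq_count' _ _
    (hinj u), Sym2.eq_swap, Multiset.count_map_eq_count' _ _ (hinj v)]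
  rintro w ⟨hwu, hwv⟩
  refine Multiset.count_eq_zero.mpr fun hmem => ?_
  obtain ⟨y, -, hy⟩ := Multiset.mem_map.mp hmem
  rcases Sym2.mem_iff.mp (hy ▸ Sym2.mem_mk_left w y) with rfl | rfl
  · exact hwu rfl
  · exact hwv rfl

lemma mk_self_notMem_edgeMS (hown : ∀ u, u ∉ s u) (w : Fin n) : s(w, w) ∉ edgeMS s := by
  rw [edgeMS, Multiset.mem_sum]
  rintro ⟨x, -, hx⟩
  obtain ⟨y, hy, hxy⟩ := Multiset.mem_map.mp hx
  rcases Sym2.eq_iff.mp hxy with ⟨rfl, rfl⟩ | ⟨rfl, rfl⟩ <;> exact hown _ hy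

lemma card_edgeMS_of_count_eq_two (hown : ∀ u, u ∉ s u)
    (hdouble : ∀ u v : Fin n, u ≠ v → (edgeMS s).count s(u, v) = 2) :
    Multiset.card (edgeMS s) = n * (n - 1) := by
  have hcount (e : Sym2 (Fin n)) : (edgeMS s).count e = if e.IsDiag then 0 else 2 := by
    induction e using Sym2.ind with
    | h a b =>
      by_cases hab : a = b
      · subst hab
        simp [Multiset.count_eq_zero.mpr (mk_self_notMem_edgeMS s hown a)]
      · simp [hab, hdouble a b hab]
  rw [← Multiset.sum_count_eq_card (s := univ) fun _ _ => mem_univ _, sum_congr rfl fun e _ =>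
    hcount e, sum_ite, sum_const_zero, zero_add, sum_const, smul_eq_mul, ← Fintype.card_subtype,
    Sym2.card_subtype_not_diag, Fintype.card_fin, mul_comm, Nat.choose_two_right]
  exact Nat.two_mul_div_two_of_even (Nat.even_mul_pred_self n)

lemma card_edgeMS_update (u : Fin n) (t : Multiset (Fin n)) :
    Multiset.card (edgeMS (Function.update s u t)) + Multiset.card (s u) =
      Multiset.card (edgeMS s) + Multiset.card t := by
  simp only [card_edgeMS, Function.apply_update (fun _ => Multiset.card),
    sum_update_of_mem (mem_univ u), ← add_sum_erase _ _ (mem_univ u), sdiff_singleton_eq_erase]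
  omega

lemma card_le_card_add_sum_two_sub_count {u : Fin n} (hu : u ∉ s u)
    (hdouble : ∀ v, v ≠ u → (edgeMS s).count s(u, v) = 2) (t : Multiset (Fin n)) :
    Multiset.card (s u) ≤ Multiset.card t +
      ∑ v ∈ univ.erase u, (2 - (edgeMS (Function.update s u t)).count s(u, v)) :=
  calc Multiset.card (s u) = ∑ v ∈ univ.erase u, (s u).count v :=
        (Multiset.sum_count_eq_card fun v hv => mem_erase.mpr ⟨ne_of_mem_of_not_mem hv hu,
          mem_univ v⟩).symm
    _ ≤ ∑ v ∈ univ.erase u,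
          (t.count v + (2 - (edgeMS (Function.update s u t)).count s(u, v))) :=
        sum_le_sum fun v hv => by
          have hvu := ne_of_mem_erase hv
          have hnew := count_edgeMS (Function.update s u t) hvu.symm
          rw [Function.update_self, Function.update_of_ne hvu] at hnew
          have hold := count_edgeMS s hvu.symm
          have := hdouble v hvu
          omega
    _ ≤ _ := by
        rw [sum_add_distrib]
        gcongr
        exact (sum_le_sum_of_subset (erase_subset u univ)).trans
          (Multiset.sum_count_eq_card fun v _ => mem_univ v).le

end EdgeMultiset

lemma doubledClique_selling_unprofitable {n : ℕ} {α : ℝ≥0∞} {s : Fin n → Multiset (Fin n)}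
    (hown : ∀ u : Fin n, u ∉ s u)
    (hdouble : ∀ u v : Fin n, u ≠ v → (edgeMS s).count s(u, v) = 2)
    (hα : α ≤ ((n * (n - 1) - 1 : ℕ) : ℝ≥0∞)⁻¹) {u : Fin n} {t : Multiset (Fin n)}
    (hsell : Multiset.card t < Multiset.card (s u)) :
    α * Multiset.card (s u) + (n - 1 : ℕ) ≤
      α * Multiset.card t + evCost (edgeMS (Function.update s u t)) u := by
  have hdeficit := card_le_card_add_sum_two_sub_count s (hown u) (fun v hv => hdouble u v hv.symm) t
  have hsize := card_edgeMS_update s u t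
  rw [card_edgeMS_of_count_eq_two s hown hdouble] at hsize
  set m' := edgeMS (Function.update s u t)
  obtain ⟨v, hv⟩ := Multiset.card_pos_iff_exists_mem.mp (by omega : 0 < Multiset.card (s u))
  rcases le_or_gt (Multiset.card m') 1 with hm'_le | hm'_gt
  · rw [evCost_eq_top hm'_le (ne_of_mem_of_not_mem hv (hown u)), add_top]
    exact le_top
  have hα' : α ≤ (Multiset.card m' : ℝ≥0∞)⁻¹ :=
    hα.trans (ENNReal.inv_le_inv.mpr (mod_cast (by omega : Multiset.card m' ≤ n * (n - 1) - 1)))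
  have hdeviate := le_evCost_of_two_le_card hm'_gt u
  rw [Fintype.card_fin, ← Nat.cast_sum] at hdeviate
  set D := ∑ v ∈ univ.erase u, (2 - m'.count s(u, v))
  calc α * Multiset.card (s u) + (n - 1 : ℕ)
      ≤ α * (Multiset.card t + D : ℕ) + (n - 1 : ℕ) := by gcongr
    _ = α * Multiset.card t + α * D + (n - 1 : ℕ) := by push_cast; ring
    _ ≤ α * Multiset.card t + ((n - 1 : ℕ) + (Multiset.card m' : ℝ≥0∞)⁻¹ * D) := by
        rw [add_assoc, add_comm (α * D)]
        gcongr
    _ ≤ α * Multiset.card t + evCost m' u := by gcongr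

/-- The doubled clique `DG_n` (two parallel edges between every pair of agents, no
self-loops, arbitrary ownership) is a pure Nash equilibrium of the adversarial network
creation game whenever `α ≤ 1/(n(n-1)-1)`. -/
theorem doubledClique_isNE {n : ℕ} (α : ℝ≥0∞) (s : Fin n → Multiset (Fin n))
    (hown : ∀ u : Fin n, u ∉ s u)
    (hdouble : ∀ u v : Fin n, u ≠ v → (edgeMS s).count s(u, v) = 2)
    (hα : α ≤ ((n * (n - 1) - 1 : ℕ) : ℝ≥0∞)⁻¹) :
    IsNE α s := by
  intro u t _
  have hstay : evCost (edgeMS s) u ≤ (n - 1 : ℕ) := by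
    simpa using evCost_le_card_sub_one fun v hv => (hdouble u v hv.symm).ge
  rw [agentCost, agentCost, Function.update_self]
  rcases le_or_gt (Multiset.card (s u)) (Multiset.card t) with hbuy | hsell
  · gcongr
    exact hstay.trans (by simpa using card_sub_one_le_evCost _ u)
  · exact (add_le_add_right hstay _).trans
      (doubledClique_selling_unprofitable hown hdouble hα hsell)
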